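/- arXiv:2311.18797 — 2 statements merged into one kernel-verified Lean document; each statement's English description precedes it below -/
import Mathlib

section
/- Let X be a k-regular graph, A its adjacency matrix, λ = k·cos θ an eigenvalue with θ ∈ (0,π) and E_λ the corresponding spectral projection. Then F_θ = (1/(2k sin²θ)) (D_t − e^{iθ} D_h)^T E_λ (D_t − e^{−iθ} D_h) satisfies U F_θ = e^{iθ} F_θ, where U = R(2/k·D_t^T D_t − I). -/
noncomputable section
namespace QW
open SimpleGraph Matrix Complex Finset

variable {V : Type} [Fintype V] [DecidableEq V]

/-- arc-tail incidence matrix: rows indexed by vertices, columns by arcs (darts). -/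
def Dt (G : SimpleGraph V) : Matrix V G.Dart ℂ :=
  Matrix.of fun v d => if d.fst = v then 1 else 0

/-- arc-head incidence matrix. -/
def Dh (G : SimpleGraph V) : Matrix V G.Dart ℂ :=
  Matrix.of fun v d => if d.snd = v then 1 else 0

/-- arc-reversal permutation matrix. -/
def Rrev (G : SimpleGraph V) [DecidableRel G.Adj] : Matrix G.Dart G.Dart ℂ :=
  Matrix.of fun d e => if e = d.symm then 1 else 0

/-- Grover arc-reversal walk transition matrix `U = R(2/k·DtᵀDt − I)`. -/
def Uwalk (G : SimpleGraph V) [DecidableRel G.Adj] (k : ℕ) : Matrix G.Dart G.Dart ℂ :=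
  Rrev G * ((2 / (k : ℂ)) • ((Dt G)ᵀ * Dt G) - 1)

/-- initial state: uniform superposition of outgoing arcs of `a`. -/
def xstate (G : SimpleGraph V) (k : ℕ) (a : V) : G.Dart → ℂ :=
  ((Real.sqrt k : ℂ))⁻¹ • (Dt G)ᵀ.mulVec (Pi.single a 1)

/-- Euclidean norm of a complex vector. -/
def enorm {α : Type} [Fintype α] (v : α → ℂ) : ℝ :=
  Real.sqrt (∑ i, ‖v i‖ ^ 2)

/-- pretty good state transfer from `x` to `y` with respect to `U`. -/
def PGST {α : Type} [Fintype α] [DecidableEq α] (U : Matrix α α ℂ) (x y : α → ℂ) : Prop :=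
  ∃ γ : ℂ, ‖γ‖ = 1 ∧ ∀ ε : ℝ, 0 < ε → ∃ t : ℕ,
    enorm ((U ^ t).mulVec x - γ • y) < ε


lemma DtDtT (G : SimpleGraph V) [DecidableRel G.Adj] (k : ℕ)
    (hreg : G.IsRegularOfDegree k) :
    Dt G * (Dt G)ᵀ = (k : ℂ) • (1 : Matrix V V ℂ) := by
  ext u v
  simp only [Matrix.mul_apply, Dt, Matrix.transpose_apply, Matrix.of_apply,
    Matrix.smul_apply, Matrix.one_apply, smul_eq_mul]
  by_cases h : u = v
  · subst h
    rw [if_pos rfl, mul_one]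
    have : ∀ d : G.Dart, (if d.fst = u then (1:ℂ) else 0) * (if d.fst = u then 1 else 0)
        = if d.fst = u then 1 else 0 := by
      intro d; by_cases hd : d.fst = u <;> simp [hd]
    rw [Finset.sum_congr rfl fun d _ => this d, Finset.sum_boole]
    rw [show ({d : G.Dart | d.fst = u} : Finset _).card = G.degree u from
      G.dart_fst_fiber_card_eq_degree u, hreg u]
  · rw [if_neg h, mul_zero]
    apply Finset.sum_eq_zero
    intro d _
    by_cases h1 : d.fst = u
    · have h2 : ¬ d.toProd.1 = v := by rw [h1]; exact h
      simp [h2]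
    · simp [h1]

lemma DtDhT (G : SimpleGraph V) [DecidableRel G.Adj] :
    Dt G * (Dh G)ᵀ = G.adjMatrix ℂ := by
  ext u v
  simp only [Matrix.mul_apply, Dt, Dh, Matrix.transpose_apply, Matrix.of_apply,
    SimpleGraph.adjMatrix_apply]
  by_cases h : G.Adj u v
  · rw [if_pos h]
    rw [Finset.sum_eq_single (⟨(u, v), h⟩ : G.Dart)]
    · simp
    · intro d _ hd
      by_cases h1 : d.fst = u
      · by_cases h2 : d.snd = v
        · exfalso; apply hd; apply SimpleGraph.Dart.ext
          exact Prod.ext h1 h2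
        · simp [h2]
      · simp [h1]
    · simp
  · rw [if_neg h]
    apply Finset.sum_eq_zero
    intro d _
    by_cases h1 : d.fst = u
    · by_cases h2 : d.snd = v
      · exfalso; apply h; rw [← h1, ← h2]; exact d.adj
      · simp [h2]
    · simp [h1]

lemma RDtT (G : SimpleGraph V) [DecidableRel G.Adj] :
    Rrev G * (Dt G)ᵀ = (Dh G)ᵀ := by
  ext d v
  simp only [Matrix.mul_apply, Rrev, Dt, Dh, Matrix.transpose_apply, Matrix.of_apply]
  rw [Finset.sum_eq_single d.symm]
  · simp [SimpleGraph.Dart.symm]; congr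
  · intro e _ he; rw [if_neg he, zero_mul]
  · simp

lemma RDhT (G : SimpleGraph V) [DecidableRel G.Adj] :
    Rrev G * (Dh G)ᵀ = (Dt G)ᵀ := by
  ext d v
  simp only [Matrix.mul_apply, Rrev, Dt, Dh, Matrix.transpose_apply, Matrix.of_apply]
  rw [Finset.sum_eq_single d.symm]
  · simp [SimpleGraph.Dart.symm]; congr
  · intro e _ he; rw [if_neg he, zero_mul]
  · simp

theorem stmt5 {V : Type} [Fintype V] [DecidableEq V] (G : SimpleGraph V)
    [DecidableRel G.Adj] (k : ℕ) (hk : 0 < k) (hreg : G.IsRegularOfDegree k)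
    (θ : ℝ) (hθ : θ ∈ Set.Ioo 0 Real.pi)
    (E : Matrix V V ℂ) (hE_herm : E.IsHermitian) (hE_idem : E * E = E)
    (hAE : G.adjMatrix ℂ * E = ((k * Real.cos θ : ℝ) : ℂ) • E)
    (hEA : E * G.adjMatrix ℂ = ((k * Real.cos θ : ℝ) : ℂ) • E)
    (F : Matrix G.Dart G.Dart ℂ)
    (hF : F = ((2 * k * Real.sin θ ^ 2 : ℝ) : ℂ)⁻¹ •
      ((Dt G - Complex.exp (θ * Complex.I) • Dh G)ᵀ * E *
        (Dt G - Complex.exp (-θ * Complex.I) • Dh G))) :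
    Uwalk G k * F = Complex.exp (θ * Complex.I) • F := by
  have hk0 : (k : ℂ) ≠ 0 := Nat.cast_ne_zero.mpr hk.ne'
  set e := Complex.exp (θ * Complex.I) with he
  have hquad : (1 : ℂ) - 2 * Complex.cos (θ : ℂ) * e = -(e ^ 2) := by
    rw [he, Complex.exp_mul_I]
    linear_combination (Complex.sin θ) ^ 2 * Complex.I_sq - Complex.sin_sq_add_cos_sq (θ : ℂ)
  have hlam : ((k * Real.cos θ : ℝ) : ℂ) = (k : ℂ) * Complex.cos (θ : ℂ) := by
    push_cast [Complex.ofReal_cos]; ring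
  set P := E * (Dt G - Complex.exp (-θ * Complex.I) • Dh G) with hP
  set T := (Dt G)ᵀ * P with hT
  set H := (Dh G)ᵀ * P with hH
  have hAP : G.adjMatrix ℂ * P = ((k : ℂ) * Complex.cos (θ : ℂ)) • P := by
    rw [hP, ← Matrix.mul_assoc, hAE, Matrix.smul_mul, hlam]
  have hDtT : Dt G * T = (k : ℂ) • P := by
    rw [hT, ← Matrix.mul_assoc, DtDtT G k hreg, Matrix.smul_mul, Matrix.one_mul]
  have hDtH : Dt G * H = ((k : ℂ) * Complex.cos (θ : ℂ)) • P := by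
    rw [hH, ← Matrix.mul_assoc, DtDhT, hAP]
  have hRT : Rrev G * T = H := by rw [hT, hH, ← Matrix.mul_assoc, RDtT]
  have hRH : Rrev G * H = T := by rw [hH, hT, ← Matrix.mul_assoc, RDhT]
  have hMX : (Dt G - e • Dh G)ᵀ * E * (Dt G - Complex.exp (-θ * Complex.I) • Dh G)
      = T - e • H := by
    rw [Matrix.transpose_sub, Matrix.transpose_smul, Matrix.mul_assoc, ← hP,
      Matrix.sub_mul, Matrix.smul_mul, ← hT, ← hH]
  have hDtX : Dt G * (T - e • H) = ((k : ℂ) - e * ((k : ℂ) * Complex.cos (θ : ℂ))) • P := by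
    rw [Matrix.mul_sub, Matrix.mul_smul, hDtT, hDtH, smul_smul, sub_smul]
  have hRX : Rrev G * (T - e • H) = H - e • T := by
    rw [Matrix.mul_sub, Matrix.mul_smul, hRT, hRH]
  have key : Uwalk G k * (T - e • H) = e • (T - e • H) := by
    rw [Uwalk, Matrix.mul_assoc, Matrix.sub_mul, Matrix.smul_mul, Matrix.one_mul,
      Matrix.mul_assoc, hDtX, Matrix.mul_smul, ← hT,
      Matrix.mul_sub, Matrix.mul_smul, Matrix.mul_smul, hRT, hRX]
    match_scalars
    · field_simp
      linear_combination hquad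
    · ring
  rw [hF, hMX, Matrix.mul_smul, key, smul_comm]


end QW
end
end

section
/- Let X be a non-bipartite connected regular graph on n vertices lying in an association scheme, and suppose X admits local ε-uniform mixing at some vertex a towards col(D_t^T), i.e., there is pretty good state transfer from x_a to a flat state of the form D_t^T w. Then the adjacency algebra of the scheme contains a regular real Hadamard matrix of order n; consequently n is a perfect square divisible by 4 (for n > 2). -/
noncomputable section
namespace QW
open SimpleGraph Matrix Complex Finset

variable {V : Type} [Fintype V] [DecidableEq V]

def Dtr (G : SimpleGraph V) : Matrix V G.Dart ℝ :=
  Matrix.of fun v d => if d.fst = v then 1 else 0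

def Dhr (G : SimpleGraph V) : Matrix V G.Dart ℝ :=
  Matrix.of fun v d => if d.snd = v then 1 else 0

def Rr (G : SimpleGraph V) [DecidableRel G.Adj] : Matrix G.Dart G.Dart ℝ :=
  Matrix.of fun d e => if e = d.symm then 1 else 0

def Ur (G : SimpleGraph V) [DecidableRel G.Adj] (k : ℕ) : Matrix G.Dart G.Dart ℝ :=
  Rr G * ((2 / (k : ℝ)) • ((Dtr G)ᵀ * Dtr G) - 1)

variable (G : SimpleGraph V) [DecidableRel G.Adj]

lemma Dtr_mul_Dtr_transpose {k : ℕ} (hreg : G.IsRegularOfDegree k) :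
    Dtr G * (Dtr G)ᵀ = (k : ℝ) • 1 := by
  ext u v
  simp only [Matrix.mul_apply, Dtr, transpose_apply, Matrix.of_apply, Matrix.smul_apply,
    Matrix.one_apply, smul_eq_mul]
  have hterm : ∀ d : G.Dart,
      ((if d.fst = u then (1:ℝ) else 0) * (if d.fst = v then 1 else 0))
      = if d.fst = u ∧ d.fst = v then 1 else 0 := by
    intro d; by_cases h1 : d.fst = u <;> by_cases h2 : d.fst = v <;> simp [h1, h2]
  rw [Finset.sum_congr rfl (fun d _ => hterm d), Finset.sum_boole]
  by_cases h : u = v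
  · subst h
    simp only [and_self, if_pos rfl, mul_one]
    have := G.dart_fst_fiber_card_eq_degree u
    rw [show ({d : G.Dart | d.fst = u} : Finset _) = Finset.univ.filter (fun d => d.fst = u) from rfl] at this
    simp [this, hreg u]
  · rw [if_neg h, mul_zero]
    norm_num
    intro d h1 h2
    exact h (h1 ▸ h2)

lemma Dtr_mul_Dhr_transpose : Dtr G * (Dhr G)ᵀ = G.adjMatrix ℝ := by
  ext u v
  simp only [Matrix.mul_apply, Dtr, Dhr, transpose_apply, Matrix.of_apply, adjMatrix_apply]
  have hterm : ∀ d : G.Dart,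
      ((if d.fst = u then (1:ℝ) else 0) * (if d.snd = v then 1 else 0))
      = if d.fst = u ∧ d.snd = v then 1 else 0 := by
    intro d; by_cases h1 : d.fst = u <;> by_cases h2 : d.snd = v <;> simp [h1, h2]
  rw [Finset.sum_congr rfl (fun d _ => hterm d), Finset.sum_boole]
  by_cases h : G.Adj u v
  · rw [if_pos h]
    norm_cast
    rw [Finset.card_eq_one]
    refine ⟨SimpleGraph.Dart.mk (u, v) h, ?_⟩
    ext e
    simp only [Finset.mem_filter, Finset.mem_univ, true_and, Finset.mem_singleton]
    constructor
    · rintro ⟨h1, h2⟩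
      exact SimpleGraph.Dart.ext _ _ (Prod.ext h1 h2)
    · rintro rfl; exact ⟨rfl, rfl⟩
  · rw [if_neg h]
    norm_cast
    rw [Finset.card_eq_zero]
    ext e
    simp only [Finset.mem_filter, Finset.mem_univ, true_and, Finset.notMem_empty, iff_false]
    rintro ⟨h1, h2⟩
    exact h (h1 ▸ h2 ▸ e.adj)

lemma Rr_mul_Dtr_transpose : Rr G * (Dtr G)ᵀ = (Dhr G)ᵀ := by
  ext d v
  simp only [Matrix.mul_apply, Rr, Dtr, Dhr, transpose_apply, Matrix.of_apply]
  rw [Finset.sum_eq_single d.symm]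
  · simp [SimpleGraph.Dart.symm]; rfl
  · intro e _ he; rw [if_neg he, zero_mul]
  · intro h; exact absurd (Finset.mem_univ _) h

lemma Rr_mul_Dhr_transpose : Rr G * (Dhr G)ᵀ = (Dtr G)ᵀ := by
  ext d v
  simp only [Matrix.mul_apply, Rr, Dtr, Dhr, transpose_apply, Matrix.of_apply]
  rw [Finset.sum_eq_single d.symm]
  · simp [SimpleGraph.Dart.symm]; rfl
  · intro e _ he; rw [if_neg he, zero_mul]
  · intro h; exact absurd (Finset.mem_univ _) h

lemma Rr_mul_Rr : Rr G * Rr G = 1 := by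
  ext d e
  simp only [Matrix.mul_apply, Rr, Matrix.of_apply, Matrix.one_apply]
  rw [Finset.sum_eq_single d.symm]
  · rw [if_pos rfl, one_mul]
    by_cases h : e = d.symm.symm
    · rw [if_pos h, if_pos]; rw [h, SimpleGraph.Dart.symm_symm]
    · rw [if_neg h, if_neg]; rw [SimpleGraph.Dart.symm_symm] at h; exact fun hh => h hh.symm
  · intro b _ hb; rw [if_neg hb, zero_mul]
  · intro h; exact absurd (Finset.mem_univ _) h

lemma Rr_transpose : (Rr G)ᵀ = Rr G := by
  ext d e
  simp only [transpose_apply, Rr, Matrix.of_apply]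
  by_cases h : d = e.symm
  · rw [if_pos h, if_pos]; rw [h, SimpleGraph.Dart.symm_symm]
  · rw [if_neg h, if_neg]
    intro hh; exact h (by rw [hh, SimpleGraph.Dart.symm_symm])


variable {k : ℕ}

lemma coin_sq (hk : 0 < k) (hreg : G.IsRegularOfDegree k) :
    ((2 / (k : ℝ)) • ((Dtr G)ᵀ * Dtr G) - 1) * ((2 / (k : ℝ)) • ((Dtr G)ᵀ * Dtr G) - 1) = 1 := by
  have hk' : (k : ℝ) ≠ 0 := Nat.cast_ne_zero.mpr hk.ne'
  have hBB : ((Dtr G)ᵀ * Dtr G) * ((Dtr G)ᵀ * Dtr G) = (k : ℝ) • ((Dtr G)ᵀ * Dtr G) := by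
    calc ((Dtr G)ᵀ * Dtr G) * ((Dtr G)ᵀ * Dtr G)
        = (Dtr G)ᵀ * (Dtr G * (Dtr G)ᵀ) * Dtr G := by simp only [Matrix.mul_assoc]
      _ = (Dtr G)ᵀ * ((k : ℝ) • (1 : Matrix V V ℝ)) * Dtr G := by rw [Dtr_mul_Dtr_transpose G hreg]
      _ = (k : ℝ) • ((Dtr G)ᵀ * Dtr G) := by
          rw [Matrix.mul_smul, Matrix.mul_one, Matrix.smul_mul]
  set B := (Dtr G)ᵀ * Dtr G with hB
  have : ((2 / (k : ℝ)) • B - 1) * ((2 / (k : ℝ)) • B - 1)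
      = ((2 / (k:ℝ)) * (2 / k)) • (B * B) - ((2 / (k:ℝ)) + (2 / k)) • B + 1 := by
    rw [Matrix.sub_mul, Matrix.mul_sub, Matrix.mul_sub, Matrix.smul_mul, Matrix.mul_smul,
      Matrix.one_mul, Matrix.mul_one, smul_smul, add_smul, Matrix.one_mul]
    abel
  rw [this, hBB, smul_smul]
  have : (2 / (k:ℝ) * (2 / ↑k) * ↑k) = ((2 / (k:ℝ)) + (2 / k)) := by field_simp; ring
  rw [this]
  abel

lemma Ur_ortho (hk : 0 < k) (hreg : G.IsRegularOfDegree k) :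
    (Ur G k)ᵀ * Ur G k = 1 := by
  have hct : ((2 / (k : ℝ)) • ((Dtr G)ᵀ * Dtr G) - 1)ᵀ = (2 / (k : ℝ)) • ((Dtr G)ᵀ * Dtr G) - 1 := by
    rw [Matrix.transpose_sub, Matrix.transpose_smul, Matrix.transpose_mul, Matrix.transpose_transpose,
      Matrix.transpose_one]
  rw [Ur, Matrix.transpose_mul, hct]
  calc ((2 / (k : ℝ)) • ((Dtr G)ᵀ * Dtr G) - 1) * (Rr G)ᵀ * (Rr G * ((2 / (k : ℝ)) • ((Dtr G)ᵀ * Dtr G) - 1))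
      = ((2 / (k : ℝ)) • ((Dtr G)ᵀ * Dtr G) - 1) * ((Rr G)ᵀ * Rr G) * ((2 / (k : ℝ)) • ((Dtr G)ᵀ * Dtr G) - 1) := by
        noncomm_ring
    _ = ((2 / (k : ℝ)) • ((Dtr G)ᵀ * Dtr G) - 1) * ((2 / (k : ℝ)) • ((Dtr G)ᵀ * Dtr G) - 1) := by
        rw [Rr_transpose, Rr_mul_Rr, Matrix.mul_one]
    _ = 1 := coin_sq G hk hreg

lemma Ur_pow_ortho (hk : 0 < k) (hreg : G.IsRegularOfDegree k) (t : ℕ) :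
    ((Ur G k) ^ t)ᵀ * (Ur G k) ^ t = 1 := by
  induction t with
  | zero => simp
  | succ t ih =>
      rw [pow_succ, Matrix.transpose_mul]
      calc (Ur G k)ᵀ * ((Ur G k) ^ t)ᵀ * ((Ur G k) ^ t * Ur G k)
          = (Ur G k)ᵀ * (((Ur G k) ^ t)ᵀ * (Ur G k) ^ t) * Ur G k := by noncomm_ring
        _ = (Ur G k)ᵀ * Ur G k := by rw [ih, Matrix.mul_one]
        _ = 1 := Ur_ortho G hk hreg

lemma Ur_mul_Dtr (hk : 0 < k) (hreg : G.IsRegularOfDegree k) :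
    Ur G k * (Dtr G)ᵀ = (Dhr G)ᵀ := by
  have hk' : (k : ℝ) ≠ 0 := Nat.cast_ne_zero.mpr hk.ne'
  rw [Ur, Matrix.mul_assoc, Matrix.sub_mul, Matrix.smul_mul, Matrix.one_mul, Matrix.mul_assoc,
    Dtr_mul_Dtr_transpose G hreg]
  have : (Dtr G)ᵀ * ((k:ℝ) • (1 : Matrix V V ℝ)) = (k:ℝ) • (Dtr G)ᵀ := by
    rw [Matrix.mul_smul, Matrix.mul_one]
  rw [this, smul_smul]
  have : (2 / (k:ℝ)) * k = 2 := by field_simp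
  rw [this]
  have : (2:ℝ) • (Dtr G)ᵀ - (Dtr G)ᵀ = (Dtr G)ᵀ := by
    rw [two_smul]; abel
  rw [this, Rr_mul_Dtr_transpose]

lemma Ur_mul_Dhr (hk : 0 < k) (hreg : G.IsRegularOfDegree k) :
    Ur G k * (Dhr G)ᵀ = (2 / (k : ℝ)) • ((Dhr G)ᵀ * G.adjMatrix ℝ) - (Dtr G)ᵀ := by
  rw [Ur, Matrix.mul_assoc, Matrix.sub_mul, Matrix.smul_mul, Matrix.one_mul, Matrix.mul_assoc,
    Dtr_mul_Dhr_transpose G, Matrix.mul_sub, Matrix.mul_smul, ← Matrix.mul_assoc,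
    Rr_mul_Dtr_transpose, Rr_mul_Dhr_transpose]


lemma map_Dtr : (Dtr G).map (Complex.ofRealHom : ℝ →+* ℂ) = Dt G := by
  ext v d
  simp [Dtr, Dt, Matrix.map_apply, apply_ite (Complex.ofRealHom : ℝ →+* ℂ)]

lemma map_Ur (k : ℕ) :
    (Ur G k).map (Complex.ofRealHom : ℝ →+* ℂ)
      = (Rr G).map (Complex.ofRealHom : ℝ →+* ℂ) *
        ((2 / (k : ℂ)) • ((Dt G)ᵀ * Dt G) - 1) := by
  rw [Ur, Matrix.map_mul]
  congr 1
  ext d e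
  simp only [Matrix.map_apply, Matrix.sub_apply, Matrix.smul_apply, Matrix.one_apply,
    Matrix.mul_apply, Matrix.transpose_apply, smul_eq_mul, map_sub, map_sum, _root_.map_mul,
    map_div₀, map_ofNat, map_natCast, apply_ite (Complex.ofRealHom : ℝ →+* ℂ),
    _root_.map_one, map_zero]
  congr 1
  congr 1
  apply Finset.sum_congr rfl
  intro v _
  congr 1
  · simp [Dtr, Dt, apply_ite (Complex.ofRealHom : ℝ →+* ℂ)]
  · simp [Dtr, Dt, apply_ite (Complex.ofRealHom : ℝ →+* ℂ)]

lemma Ur_pow_structure (hk : 0 < k) (hreg : G.IsRegularOfDegree k)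
    (A : Matrix V V ℝ)
    (S : Submodule ℝ (Matrix V V ℝ)) (hone : (1 : Matrix V V ℝ) ∈ S)
    (hmulA : ∀ N ∈ S, A * N ∈ S) (hadj : G.adjMatrix ℝ = A) (t : ℕ) :
    ∃ N N' : Matrix V V ℝ, N ∈ S ∧ N' ∈ S ∧
      (Ur G k) ^ t * (Dtr G)ᵀ = (Dtr G)ᵀ * N + (Dhr G)ᵀ * N' := by
  induction t with
  | zero =>
      exact ⟨1, 0, hone, S.zero_mem, by simp⟩
  | succ t ih =>
      obtain ⟨N, N', hN, hN', heq⟩ := ih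
      refine ⟨-N', N + (2 / (k:ℝ)) • (A * N'), S.neg_mem hN', S.add_mem hN (S.smul_mem _ (hmulA _ hN')), ?_⟩
      rw [pow_succ', Matrix.mul_assoc, heq, Matrix.mul_add, ← Matrix.mul_assoc, ← Matrix.mul_assoc,
        Ur_mul_Dtr G hk hreg, Ur_mul_Dhr G hk hreg, hadj]
      simp only [Matrix.mul_add, Matrix.mul_neg, Matrix.mul_smul, Matrix.smul_mul,
        Matrix.sub_mul, Matrix.mul_assoc]
      abel


section Scheme
variable {d : ℕ} (A : Fin (d + 1) → Matrix V V ℝ)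

lemma span_mul_closed
    (hclosed : ∀ i j, A i * A j ∈ Submodule.span ℝ (Set.range A)) :
    ∀ M ∈ Submodule.span ℝ (Set.range A), ∀ N ∈ Submodule.span ℝ (Set.range A),
      M * N ∈ Submodule.span ℝ (Set.range A) := by
  intro M hM
  induction hM using Submodule.span_induction with
  | mem x hx =>
      obtain ⟨i, rfl⟩ := hx
      intro N hN
      induction hN using Submodule.span_induction with
      | mem y hy =>
          obtain ⟨j, rfl⟩ := hy
          exact hclosed i j
      | zero => simp
      | add y z _ _ hy hz => rw [Matrix.mul_add]; exact Submodule.add_mem _ hy hz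
      | smul c y _ hy => rw [Matrix.mul_smul]; exact Submodule.smul_mem _ _ hy
  | zero => intro N hN; simp
  | add y z _ _ hy hz =>
      intro N hN; rw [Matrix.add_mul]; exact Submodule.add_mem _ (hy N hN) (hz N hN)
  | smul c y _ hy =>
      intro N hN; rw [Matrix.smul_mul]; exact Submodule.smul_mem _ _ (hy N hN)

lemma span_transpose_closed
    (htrans : ∀ j, ∃ j', (A j)ᵀ = A j') :
    ∀ M ∈ Submodule.span ℝ (Set.range A), Mᵀ ∈ Submodule.span ℝ (Set.range A) := by
  intro M hM
  induction hM using Submodule.span_induction with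
  | mem x hx =>
      obtain ⟨i, rfl⟩ := hx
      obtain ⟨j, hj⟩ := htrans i
      rw [hj]
      exact Submodule.subset_span ⟨j, rfl⟩
  | zero => simp
  | add y z _ _ hy hz => rw [Matrix.transpose_add]; exact Submodule.add_mem _ hy hz
  | smul c y _ hy => rw [Matrix.transpose_smul]; exact Submodule.smul_mem _ _ hy

lemma span_comm
    (hcomm : ∀ i j, A i * A j = A j * A i) :
    ∀ M ∈ Submodule.span ℝ (Set.range A), ∀ N ∈ Submodule.span ℝ (Set.range A),
      M * N = N * M := by
  intro M hM
  induction hM using Submodule.span_induction with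
  | mem x hx =>
      obtain ⟨i, rfl⟩ := hx
      intro N hN
      induction hN using Submodule.span_induction with
      | mem y hy => obtain ⟨j, rfl⟩ := hy; exact hcomm i j
      | zero => simp
      | add y z _ _ hy hz => rw [Matrix.mul_add, Matrix.add_mul, hy, hz]
      | smul c y _ hy => rw [Matrix.mul_smul, Matrix.smul_mul, hy]
  | zero => intro N hN; simp
  | add y z _ _ hy hz => intro N hN; rw [Matrix.mul_add, Matrix.add_mul, hy N hN, hz N hN]
  | smul c y _ hy => intro N hN; rw [Matrix.mul_smul, Matrix.smul_mul, hy N hN]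

lemma rowsum_eq_colsum
    (hsumJ : ∑ j, A j = Matrix.of fun _ _ => (1 : ℝ))
    (hcomm : ∀ i j, A i * A j = A j * A i) (i : Fin (d + 1)) :
    ∀ u v : V, ∑ w, A i u w = ∑ w, A i w v := by
  intro u v
  have hJ : A i * (Matrix.of fun _ _ => (1:ℝ)) = (Matrix.of fun _ _ => (1:ℝ)) * A i := by
    rw [← hsumJ, Finset.mul_sum, Finset.sum_mul]
    exact Finset.sum_congr rfl fun j _ => hcomm i j
  have := congrFun (congrFun hJ u) v
  simpa [Matrix.mul_apply] using this

lemma rowsum_const_of_mem_span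
    (hsumJ : ∑ j, A j = Matrix.of fun _ _ => (1 : ℝ))
    (hcomm : ∀ i j, A i * A j = A j * A i) :
    ∀ M ∈ Submodule.span ℝ (Set.range A), ∀ u u' : V, ∑ w, M u w = ∑ w, M u' w := by
  intro M hM
  induction hM using Submodule.span_induction with
  | mem x hx =>
      obtain ⟨i, rfl⟩ := hx
      intro u u'
      rcases isEmpty_or_nonempty V with h | h
      · simp
      · obtain ⟨v⟩ := h
        rw [rowsum_eq_colsum A hsumJ hcomm i u v, rowsum_eq_colsum A hsumJ hcomm i u' v]
  | zero => simp
  | add y z _ _ hy hz =>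
      intro u u'
      simp only [Matrix.add_apply, Finset.sum_add_distrib, hy u u', hz u u']
  | smul c y _ hy =>
      intro u u'
      simp only [Matrix.smul_apply, smul_eq_mul, ← Finset.mul_sum, hy u u']

/-- for every pair there is a unique class containing it -/
lemma class_exists
    (h01 : ∀ j i i', (A j) i i' = 0 ∨ (A j) i i' = 1)
    (hsumJ : ∑ j, A j = Matrix.of fun _ _ => (1 : ℝ)) (u v : V) :
    ∃ j, A j u v = 1 ∧ ∀ j', j' ≠ j → A j' u v = 0 := by
  have hsum : ∑ j, A j u v = 1 := by
    have := congrFun (congrFun hsumJ u) v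
    simpa [Finset.sum_apply, Matrix.sum_apply] using this
  have hex : ∃ j, A j u v ≠ 0 := by
    by_contra h
    push_neg at h
    rw [Finset.sum_congr rfl (fun j _ => h j)] at hsum
    simp at hsum
  obtain ⟨j, hj⟩ := hex
  have hj1 : A j u v = 1 := (h01 j u v).resolve_left hj
  refine ⟨j, hj1, ?_⟩
  have hrest : ∑ j' ∈ Finset.univ.erase j, A j' u v = 0 := by
    have h2 := Finset.add_sum_erase Finset.univ (fun j' => A j' u v) (Finset.mem_univ j)
    rw [← h2] at hsum
    beta_reduce at hsum
    linarith
  intro j' hj'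
  have hnonneg : ∀ i ∈ Finset.univ.erase j, 0 ≤ A i u v := by
    intro i _
    rcases h01 i u v with h | h <;> rw [h] <;> norm_num
  have := (Finset.sum_eq_zero_iff_of_nonneg hnonneg).mp hrest j' (Finset.mem_erase.mpr ⟨hj', Finset.mem_univ _⟩)
  exact this

lemma class_hits_column
    (h01 : ∀ j i i', (A j) i i' = 0 ∨ (A j) i i' = 1)
    (hsumJ : ∑ j, A j = Matrix.of fun _ _ => (1 : ℝ))
    (hcomm : ∀ i j, A i * A j = A j * A i)
    {i : Fin (d + 1)} {u w : V} (hone : A i u w = 1) (a : V) :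
    ∃ v, A i v a = 1 := by
  have hpos : 0 < ∑ w', A i u w' := by
    have hnonneg : ∀ x ∈ Finset.univ, (0:ℝ) ≤ A i u x := by
      intro x _; rcases h01 i u x with h | h <;> rw [h] <;> norm_num
    have hle : (1:ℝ) ≤ ∑ w', A i u w' := by
      calc (1:ℝ) = A i u w := hone.symm
        _ ≤ ∑ w', A i u w' := Finset.single_le_sum hnonneg (Finset.mem_univ w)
    linarith
  rw [rowsum_eq_colsum A hsumJ hcomm i u a] at hpos
  have : ∃ v, A i v a ≠ 0 := by
    by_contra h
    push_neg at h
    rw [Finset.sum_congr rfl (fun v _ => h v)] at hpos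
    simp at hpos
  obtain ⟨v, hv⟩ := this
  exact ⟨v, (h01 i v a).resolve_left hv⟩

end Scheme



section Gram
variable {k : ℕ}

lemma ZtZ (hk : 0 < k) (hreg : G.IsRegularOfDegree k) (t : ℕ) :
    ((Ur G k) ^ t * (Dtr G)ᵀ)ᵀ * ((Ur G k) ^ t * (Dtr G)ᵀ) = (k:ℝ) • 1 := by
  rw [Matrix.transpose_mul, Matrix.transpose_transpose, Matrix.mul_assoc,
    ← Matrix.mul_assoc ((Ur G k ^ t)ᵀ), Ur_pow_ortho G hk hreg, Matrix.one_mul,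
    Dtr_mul_Dtr_transpose G hreg]

lemma gram_key (hk : 0 < k) (hreg : G.IsRegularOfDegree k) (t : ℕ) :
    ∀ u v : V,
    (((k:ℝ)^2) • (1 : Matrix V V ℝ) - (Dtr G * ((Ur G k) ^ t * (Dtr G)ᵀ))ᵀ * (Dtr G * ((Ur G k) ^ t * (Dtr G)ᵀ))) u v
      = (k:ℝ)⁻¹ * ∑ d, ((((k:ℝ) • (1 : Matrix G.Dart G.Dart ℝ) - (Dtr G)ᵀ * Dtr G) * ((Ur G k) ^ t * (Dtr G)ᵀ)) : Matrix G.Dart V ℝ) d u *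
          ((((k:ℝ) • (1 : Matrix G.Dart G.Dart ℝ) - (Dtr G)ᵀ * Dtr G) * ((Ur G k) ^ t * (Dtr G)ᵀ)) : Matrix G.Dart V ℝ) d v := by
  have hk' : (k : ℝ) ≠ 0 := Nat.cast_ne_zero.mpr hk.ne'
  set Z := (Ur G k) ^ t * (Dtr G)ᵀ with hZ
  set B := (Dtr G)ᵀ * Dtr G with hB
  set F := (k:ℝ) • (1 : Matrix G.Dart G.Dart ℝ) - B with hF
  have hBB : B * B = (k : ℝ) • B := by
    rw [hB]
    calc (Dtr G)ᵀ * Dtr G * ((Dtr G)ᵀ * Dtr G)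
        = (Dtr G)ᵀ * (Dtr G * (Dtr G)ᵀ) * Dtr G := by simp only [Matrix.mul_assoc]
      _ = (k:ℝ) • ((Dtr G)ᵀ * Dtr G) := by
          rw [Dtr_mul_Dtr_transpose G hreg, Matrix.mul_smul, Matrix.mul_one, Matrix.smul_mul]
  have hFt : Fᵀ = F := by
    rw [hF, Matrix.transpose_sub, Matrix.transpose_smul, Matrix.transpose_one, hB,
      Matrix.transpose_mul, Matrix.transpose_transpose]
  have hFF : F * F = (k:ℝ) • F := by
    simp only [hF, Matrix.sub_mul, Matrix.mul_sub, Matrix.smul_mul, Matrix.mul_smul,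
      Matrix.one_mul, Matrix.mul_one, hBB, smul_sub, smul_smul]
    abel
  have hZZ : Zᵀ * Z = (k:ℝ) • 1 := ZtZ G hk hreg t
  have hDZ : (Dtr G * Z)ᵀ * (Dtr G * Z) = Zᵀ * (B * Z) := by
    rw [Matrix.transpose_mul, hB]
    simp only [Matrix.mul_assoc]
  have hE : ((k:ℝ)^2) • (1 : Matrix V V ℝ) - (Dtr G * Z)ᵀ * (Dtr G * Z) = Zᵀ * F * Z := by
    simp only [hDZ, hF, Matrix.mul_sub, Matrix.sub_mul, Matrix.mul_smul, Matrix.mul_one,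
      Matrix.smul_mul, Matrix.mul_assoc, hZZ, smul_smul, sq]
  have hE2 : Zᵀ * F * Z = (k:ℝ)⁻¹ • ((F * Z)ᵀ * (F * Z)) := by
    have h3 : (F * Z)ᵀ * (F * Z) = Zᵀ * Fᵀ * (F * Z) := by rw [Matrix.transpose_mul]
    rw [h3, hFt, Matrix.mul_assoc, Matrix.mul_assoc Zᵀ F (F * Z), ← Matrix.mul_assoc F F Z,
      hFF, Matrix.smul_mul, Matrix.mul_smul, smul_smul, inv_mul_cancel₀ hk', one_smul]
  intro u v
  rw [hE, hE2]
  simp only [Matrix.smul_apply, Matrix.mul_apply, Matrix.transpose_apply, smul_eq_mul]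

lemma gram_diag_nonneg (hk : 0 < k) (hreg : G.IsRegularOfDegree k) (t : ℕ) (u : V) :
    0 ≤ (((k:ℝ)^2) • (1 : Matrix V V ℝ) - (Dtr G * ((Ur G k) ^ t * (Dtr G)ᵀ))ᵀ * (Dtr G * ((Ur G k) ^ t * (Dtr G)ᵀ))) u u := by
  rw [gram_key G hk hreg t u u]
  apply mul_nonneg
  · positivity
  · exact Finset.sum_nonneg fun d _ => mul_self_nonneg _

lemma gram_cs (hk : 0 < k) (hreg : G.IsRegularOfDegree k) (t : ℕ) (u v : V) :
    ((((k:ℝ)^2) • (1 : Matrix V V ℝ) - (Dtr G * ((Ur G k) ^ t * (Dtr G)ᵀ))ᵀ * (Dtr G * ((Ur G k) ^ t * (Dtr G)ᵀ))) u v)^2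
      ≤ (((k:ℝ)^2) • (1 : Matrix V V ℝ) - (Dtr G * ((Ur G k) ^ t * (Dtr G)ᵀ))ᵀ * (Dtr G * ((Ur G k) ^ t * (Dtr G)ᵀ))) u u
        * (((k:ℝ)^2) • (1 : Matrix V V ℝ) - (Dtr G * ((Ur G k) ^ t * (Dtr G)ᵀ))ᵀ * (Dtr G * ((Ur G k) ^ t * (Dtr G)ᵀ))) v v := by
  have hk' : (0:ℝ) < k := Nat.cast_pos.mpr hk
  rw [gram_key G hk hreg t u v, gram_key G hk hreg t u u, gram_key G hk hreg t v v]
  set f : G.Dart → ℝ := fun d => ((((k:ℝ) • (1 : Matrix G.Dart G.Dart ℝ) - (Dtr G)ᵀ * Dtr G) * ((Ur G k) ^ t * (Dtr G)ᵀ)) : Matrix G.Dart V ℝ) d u with hf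
  set g : G.Dart → ℝ := fun d => ((((k:ℝ) • (1 : Matrix G.Dart G.Dart ℝ) - (Dtr G)ᵀ * Dtr G) * ((Ur G k) ^ t * (Dtr G)ᵀ)) : Matrix G.Dart V ℝ) d v with hg
  have cs := sum_mul_sq_le_sq_mul_sq Finset.univ f g
  have h1 : ((k:ℝ)⁻¹ * ∑ d, f d * g d)^2 = (k:ℝ)⁻¹ * (k:ℝ)⁻¹ * (∑ d, f d * g d)^2 := by ring
  rw [h1]
  calc (k:ℝ)⁻¹ * (k:ℝ)⁻¹ * (∑ d, f d * g d)^2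
      ≤ (k:ℝ)⁻¹ * (k:ℝ)⁻¹ * ((∑ d, f d ^ 2) * (∑ d, g d ^ 2)) := by
        apply mul_le_mul_of_nonneg_left cs
        positivity
    _ = ((k:ℝ)⁻¹ * ∑ d, f d * f d) * ((k:ℝ)⁻¹ * ∑ d, g d * g d) := by
        simp only [sq]; ring
end Gram

lemma map_Rr : (Rr G).map (Complex.ofRealHom : ℝ →+* ℂ) = Rrev G := by
  ext d e
  simp [Rr, Rrev, Matrix.map_apply, apply_ite (Complex.ofRealHom : ℝ →+* ℂ)]

lemma map_Ur_eq (k : ℕ) : (Ur G k).map (Complex.ofRealHom : ℝ →+* ℂ) = Uwalk G k := by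
  rw [map_Ur, map_Rr, Uwalk]

def Pmm (G : SimpleGraph V) [DecidableRel G.Adj] (k t : ℕ) : Matrix V V ℝ :=
  Dtr G * ((Ur G k) ^ t * (Dtr G)ᵀ)

lemma map_Pmm (k t : ℕ) :
    (Pmm G k t).map (Complex.ofRealHom : ℝ →+* ℂ) = Dt G * ((Uwalk G k) ^ t * (Dt G)ᵀ) := by
  have hpow : ((Ur G k) ^ t).map (Complex.ofRealHom : ℝ →+* ℂ) = (Uwalk G k) ^ t := by
    have h := map_pow ((Complex.ofRealHom : ℝ →+* ℂ).mapMatrix) (Ur G k) t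
    simpa [RingHom.mapMatrix_apply, map_Ur_eq] using h
  rw [Pmm, Matrix.map_mul, Matrix.map_mul, map_Dtr, Matrix.transpose_map, map_Dtr, hpow]

lemma Dt_mul_Dt_transpose {k : ℕ} (hreg : G.IsRegularOfDegree k) :
    Dt G * (Dt G)ᵀ = (k : ℂ) • 1 := by
  have h := congrArg (fun M => M.map (Complex.ofRealHom : ℝ →+* ℂ)) (Dtr_mul_Dtr_transpose G hreg)
  simp only [Matrix.map_mul, map_Dtr, Matrix.transpose_map] at h
  rw [h]
  ext u v
  simp [Matrix.map_apply, Matrix.smul_apply, Matrix.one_apply, apply_ite (Complex.ofRealHom : ℝ →+* ℂ)]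

lemma abs_le_enorm {α : Type} [Fintype α] (v : α → ℂ) (i : α) : ‖v i‖ ≤ enorm v := by
  rw [enorm]
  have h1 : ‖v i‖ ^ 2 ≤ ∑ j, ‖v j‖ ^ 2 :=
    Finset.single_le_sum (f := fun j => ‖v j‖ ^ 2) (fun j _ => sq_nonneg _) (Finset.mem_univ i)
  calc ‖v i‖ = Real.sqrt (‖v i‖ ^ 2) := by
        rw [Real.sqrt_sq (norm_nonneg _)]
    _ ≤ _ := Real.sqrt_le_sqrt h1

attribute [local instance] Matrix.normedAddCommGroup Matrix.normedSpace

set_option maxHeartbeats 1000000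


theorem stmt19 {V : Type} [Fintype V] [DecidableEq V] (G : SimpleGraph V)
    [DecidableRel G.Adj] (k : ℕ) (hk : 0 < k) (hconn : G.Connected)
    (hreg : G.IsRegularOfDegree k) (hnonbip : ¬ G.Colorable 2)
    -- an association scheme containing X
    (d : ℕ) (A : Fin (d + 1) → Matrix V V ℝ)
    (hA0 : A 0 = 1)
    (h01 : ∀ j i i', (A j) i i' = 0 ∨ (A j) i i' = 1)
    (hsumJ : ∑ j, A j = Matrix.of fun _ _ => (1 : ℝ))
    (htrans : ∀ j, ∃ j', (A j)ᵀ = A j')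
    (hcomm : ∀ i j, A i * A j = A j * A i)
    (hclosed : ∀ i j, A i * A j ∈ Submodule.span ℝ (Set.range A))
    (j₀ : Fin (d + 1)) (hadj : G.adjMatrix ℝ = A j₀)
    -- local ε-uniform mixing at a towards col(Dtᵀ)
    (a : V) (w : V → ℂ) (y : G.Dart → ℂ) (hy : y = (Dt G)ᵀ.mulVec w)
    (hflat : ∃ c : ℝ, ∀ e, ‖y e‖ = c) (hunit : enorm y = 1)
    (hpgst : PGST (Uwalk G k) (xstate G k a) y) :
    (∃ H : Matrix V V ℝ, H ∈ Submodule.span ℝ (Set.range A) ∧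
      (∀ i j, H i j = 1 ∨ H i j = -1) ∧
      H * Hᵀ = (Fintype.card V : ℝ) • (1 : Matrix V V ℝ) ∧
      ∃ s : ℝ, H.mulVec (fun _ => 1) = fun _ => s) ∧
    (∃ t : ℕ, t * t = Fintype.card V) ∧
    (2 < Fintype.card V → 4 ∣ Fintype.card V) := by
  classical
  have hV : Nonempty V := hconn.nonempty
  have hkR : (0:ℝ) < k := Nat.cast_pos.mpr hk
  have hkR' : (k:ℝ) ≠ 0 := hkR.ne'
  have hn : 0 < Fintype.card V := Fintype.card_pos
  have hnR : (0:ℝ) < Fintype.card V := Nat.cast_pos.mpr hn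
  set S := Submodule.span ℝ (Set.range A) with hSdef
  obtain ⟨γ, hγ, hfun⟩ := hpgst
  -- the PGST sequence
  have hts : ∀ m : ℕ, ∃ t : ℕ,
      enorm (((Uwalk G k) ^ t).mulVec (xstate G k a) - γ • y) < 1 / ((m:ℝ) + 1) := by
    intro m
    apply hfun
    positivity
  choose ts hts' using hts
  -- entrywise convergence of the walk states
  have htendx : ∀ d : G.Dart,
      Filter.Tendsto (fun m => (((Uwalk G k) ^ (ts m)).mulVec (xstate G k a)) d)
        Filter.atTop (nhds (γ * y d)) := by
    intro d
    rw [tendsto_iff_norm_sub_tendsto_zero]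
    apply squeeze_zero (fun m => norm_nonneg _) (fun m => ?_)
      tendsto_one_div_add_atTop_nhds_zero_nat
    have h1 : (((Uwalk G k) ^ (ts m)).mulVec (xstate G k a)) d - γ * y d
        = ((((Uwalk G k) ^ (ts m)).mulVec (xstate G k a)) - γ • y) d := by
      simp [Pi.sub_apply, Pi.smul_apply, smul_eq_mul]
    rw [h1]
    exact le_of_lt (lt_of_le_of_lt (abs_le_enorm _ d) (hts' m))
  -- membership of the compressed walk matrices in the Bose-Mesner algebra
  have hone : (1 : Matrix V V ℝ) ∈ S := by
    rw [← hA0]; exact Submodule.subset_span ⟨0, rfl⟩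
  have hmulA : ∀ N ∈ S, A j₀ * N ∈ S := by
    intro N hN
    exact span_mul_closed A hclosed (A j₀) (Submodule.subset_span ⟨j₀, rfl⟩) N hN
  have hPmem : ∀ t : ℕ, Pmm G k t ∈ S := by
    intro t
    obtain ⟨N, N', hN, hN', heq⟩ := Ur_pow_structure G hk hreg (A j₀) S hone hmulA hadj t
    rw [Pmm, heq, Matrix.mul_add, ← Matrix.mul_assoc, ← Matrix.mul_assoc,
      Dtr_mul_Dtr_transpose G hreg, Dtr_mul_Dhr_transpose G, hadj, Matrix.smul_mul,
      Matrix.one_mul]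
    exact Submodule.add_mem _ (Submodule.smul_mem _ _ hN) (hmulA N' hN')
  -- entrywise bound
  have hPb : ∀ t : ℕ, ∀ u v : V, |Pmm G k t u v| ≤ (k:ℝ) := by
    intro t u v
    have hd := gram_diag_nonneg G hk hreg t v
    have h2 : ((Pmm G k t)ᵀ * Pmm G k t) v v ≤ (k:ℝ)^2 := by
      have h3 : (((k:ℝ)^2) • (1 : Matrix V V ℝ)
          - (Pmm G k t)ᵀ * Pmm G k t) v v
          = (k:ℝ)^2 - ((Pmm G k t)ᵀ * Pmm G k t) v v := by
        simp [Matrix.sub_apply, Matrix.smul_apply, Matrix.one_apply]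
      have hd' : (0:ℝ) ≤ (((k:ℝ)^2) • (1 : Matrix V V ℝ)
          - (Pmm G k t)ᵀ * Pmm G k t) v v := hd
      rw [h3] at hd'
      linarith
    have h4 : (Pmm G k t u v)^2 ≤ ((Pmm G k t)ᵀ * Pmm G k t) v v := by
      rw [Matrix.mul_apply]
      have : ∀ w, ((Pmm G k t)ᵀ) v w * Pmm G k t w v = (Pmm G k t w v)^2 := by
        intro w; rw [Matrix.transpose_apply, sq]
      rw [Finset.sum_congr rfl (fun w _ => this w)]
      exact Finset.single_le_sum (f := fun w => (Pmm G k t w v)^2)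
        (fun w _ => sq_nonneg _) (Finset.mem_univ u)
    nlinarith [abs_nonneg (Pmm G k t u v), _root_.sq_abs (Pmm G k t u v)]
  -- Bolzano-Weierstrass
  have hball : ∀ m : ℕ, Pmm G k (ts m) ∈ Metric.closedBall (0 : Matrix V V ℝ) k := by
    intro m
    rw [Metric.mem_closedBall, dist_zero_right, Matrix.norm_le_iff (le_of_lt hkR)]
    intro u v
    rw [Real.norm_eq_abs]
    exact hPb (ts m) u v
  obtain ⟨C₀, hCball, φ, hφ, hφtend⟩ :=
    (isCompact_closedBall (0 : Matrix V V ℝ) k).tendsto_subseq hball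
  have hSclosed : IsClosed (S : Set (Matrix V V ℝ)) := Submodule.closed_of_finiteDimensional S
  have hC₀S : C₀ ∈ S :=
    hSclosed.mem_of_tendsto hφtend (Filter.Eventually.of_forall (fun m => hPmem (ts (φ m))))
  have htendE : ∀ u v : V,
      Filter.Tendsto (fun m => Pmm G k (ts (φ m)) u v) Filter.atTop (nhds (C₀ u v)) := by
    intro u v
    rw [tendsto_iff_norm_sub_tendsto_zero]
    apply squeeze_zero (fun m => norm_nonneg _) (fun m => ?_)
      (tendsto_iff_norm_sub_tendsto_zero.mp hφtend)
    have h1 : Pmm G k (ts (φ m)) u v - C₀ u v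
        = ((fun mm => Pmm G k (ts mm)) (φ m) - C₀) u v := by simp
    rw [h1]
    exact Matrix.norm_entry_le_entrywise_sup_norm _
  -- column a of the limit matrix via PGST
  have hsqrtk : (0:ℝ) < Real.sqrt k := Real.sqrt_pos.mpr hkR
  have hsqrtkC : ((Real.sqrt k : ℝ) : ℂ) ≠ 0 := by
    simp [Complex.ofReal_ne_zero]
    exact hk.ne'
  have hQentry : ∀ t : ℕ, ∀ v : V,
      ((Pmm G k t v a : ℝ) : ℂ)
        = ∑ e : G.Dart, Dt G v e * (((Real.sqrt k : ℝ) : ℂ) * (((Uwalk G k) ^ t).mulVec (xstate G k a)) e) := by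
    intro t v
    have h0 : ((Pmm G k t v a : ℝ) : ℂ) = ((Pmm G k t).map (Complex.ofRealHom : ℝ →+* ℂ)) v a := rfl
    rw [h0, map_Pmm]
    have h1 : ((Uwalk G k) ^ t * (Dt G)ᵀ) *ᵥ Pi.single a 1
        = fun e => ((Uwalk G k) ^ t * (Dt G)ᵀ) e a := by
      rw [Matrix.mulVec_single_one]
      rfl
    have h2 : (Dt G * ((Uwalk G k) ^ t * (Dt G)ᵀ)) v a
        = ∑ e, Dt G v e * (((Uwalk G k) ^ t * (Dt G)ᵀ) e a) := Matrix.mul_apply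
    rw [h2]
    apply Finset.sum_congr rfl
    intro e _
    congr 1
    have h3 : ((Uwalk G k) ^ t * (Dt G)ᵀ) e a
        = (((Uwalk G k) ^ t * (Dt G)ᵀ) *ᵥ Pi.single a 1) e := by rw [h1]
    rw [h3, ← Matrix.mulVec_mulVec]
    have h4 : (Dt G)ᵀ *ᵥ Pi.single a 1 = ((Real.sqrt k : ℝ) : ℂ) • xstate G k a := by
      rw [xstate, smul_smul, mul_inv_cancel₀ hsqrtkC, one_smul]
    rw [h4, Matrix.mulVec_smul]
    simp
  have hDty : ∀ v : V, (∑ e : G.Dart, Dt G v e * (γ * y e)) = γ * ((k:ℂ) * w v) := by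
    intro v
    have h1 : (∑ e : G.Dart, Dt G v e * (γ * y e)) = γ * ((Dt G *ᵥ y) v) := by
      rw [Matrix.mulVec, dotProduct, Finset.mul_sum]
      apply Finset.sum_congr rfl
      intro e _
      ring
    rw [h1, hy, Matrix.mulVec_mulVec, Dt_mul_Dt_transpose G hreg]
    congr 1
    simp [Matrix.smul_mulVec, Pi.smul_apply, smul_eq_mul]
  have hcol : ∀ v : V, ((C₀ v a : ℝ) : ℂ) = ((Real.sqrt k : ℝ) : ℂ) * (γ * ((k:ℂ) * w v)) := by
    intro v
    have T1 : Filter.Tendsto (fun m => ((Pmm G k (ts (φ m)) v a : ℝ) : ℂ))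
        Filter.atTop (nhds ((C₀ v a : ℝ) : ℂ)) :=
      (Complex.continuous_ofReal.tendsto _).comp (htendE v a)
    have T2 : Filter.Tendsto (fun m => ((Pmm G k (ts (φ m)) v a : ℝ) : ℂ))
        Filter.atTop (nhds (((Real.sqrt k : ℝ) : ℂ) * (γ * ((k:ℂ) * w v)))) := by
      have h5 : ∀ m, ((Pmm G k (ts (φ m)) v a : ℝ) : ℂ)
          = ∑ e : G.Dart, Dt G v e * (((Real.sqrt k : ℝ) : ℂ) * (((Uwalk G k) ^ (ts (φ m))).mulVec (xstate G k a)) e) := by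
        intro m; exact hQentry (ts (φ m)) v
      rw [funext h5]
      have h6 : (((Real.sqrt k : ℝ) : ℂ) * (γ * ((k:ℂ) * w v)))
          = ∑ e : G.Dart, Dt G v e * (((Real.sqrt k : ℝ) : ℂ) * (γ * y e)) := by
        rw [show (∑ e : G.Dart, Dt G v e * (((Real.sqrt k : ℝ) : ℂ) * (γ * y e)))
            = ((Real.sqrt k : ℝ) : ℂ) * (∑ e : G.Dart, Dt G v e * (γ * y e)) by
          rw [Finset.mul_sum]; apply Finset.sum_congr rfl; intro e _; ring]
        rw [hDty v]
      rw [h6]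
      apply tendsto_finset_sum
      intro e _
      apply Filter.Tendsto.const_mul
      apply Filter.Tendsto.const_mul
      exact (htendx e).comp (hφ.tendsto_atTop)
    exact tendsto_nhds_unique T1 T2
  -- flatness constant
  obtain ⟨c, hc⟩ := hflat
  have hyw : ∀ d : G.Dart, y d = w d.fst := by
    intro d
    rw [hy]
    rw [Matrix.mulVec, dotProduct]
    have : ∀ v', (Dt G)ᵀ d v' * w v' = if d.fst = v' then w v' else 0 := by
      intro v'
      rw [Matrix.transpose_apply, Dt]
      by_cases h : d.fst = v' <;> simp [h]
    rw [Finset.sum_congr rfl (fun v' _ => this v'), Finset.sum_ite_eq Finset.univ d.fst w]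
    simp
  have hwc : ∀ v : V, ‖w v‖ = c := by
    intro v
    have hdeg : 0 < G.degree v := by rw [hreg v]; exact hk
    obtain ⟨b, hb⟩ := (G.degree_pos_iff_exists_adj v).mp hdeg
    have := hc (SimpleGraph.Dart.mk (v, b) hb)
    rw [hyw] at this
    exact this
  have hc0 : 0 ≤ c := by
    have hdeg : 0 < G.degree a := by rw [hreg a]; exact hk
    obtain ⟨b, hb⟩ := (G.degree_pos_iff_exists_adj a).mp hdeg
    rw [← hc (SimpleGraph.Dart.mk (a, b) hb)]
    exact norm_nonneg _
  have hcard : (Fintype.card G.Dart : ℝ) = (Fintype.card V : ℝ) * k := by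
    rw [G.dart_card_eq_sum_degrees]
    push_cast
    rw [Finset.sum_congr rfl (fun v _ => by rw [hreg v])]
    simp [Finset.sum_const, mul_comm]
  have hc2 : c^2 * ((Fintype.card V : ℝ) * k) = 1 := by
    have h1 : ∑ e : G.Dart, ‖y e‖ ^ 2 = 1 := by
      have := hunit
      rw [enorm] at this
      have h2 := congrArg (fun x => x^2) this
      simp only [one_pow] at h2
      rw [Real.sq_sqrt (Finset.sum_nonneg fun e _ => sq_nonneg _)] at h2
      exact h2
    rw [Finset.sum_congr rfl (fun e _ => by rw [hc e])] at h1
    rw [Finset.sum_const, nsmul_eq_mul] at h1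
    rw [← hcard]
    rw [mul_comm] at h1
    exact h1
  -- the modulus of entries in column a
  obtain ⟨β, hβdef⟩ : ∃ β : ℝ, β = Real.sqrt k * ((k:ℝ) * c) := ⟨_, rfl⟩
  have hβ0 : 0 ≤ β := by
    rw [hβdef]
    exact mul_nonneg (Real.sqrt_nonneg _) (mul_nonneg (le_of_lt hkR) hc0)
  have hβsq : β^2 = (k:ℝ)^2 / (Fintype.card V : ℝ) := by
    have h1 : β^2 = (Real.sqrt k)^2 * (k^2 * c^2) := by rw [hβdef]; ring
    rw [Real.sq_sqrt (le_of_lt hkR)] at h1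
    have h2 : c^2 = 1 / ((Fintype.card V : ℝ) * k) := by
      field_simp at hc2 ⊢
      linarith [hc2]
    rw [h2] at h1
    rw [h1]
    field_simp
  have hcolabs : ∀ v : V, |C₀ v a| = β := by
    intro v
    have h1 := congrArg norm (hcol v)
    rw [Complex.norm_real, Real.norm_eq_abs] at h1
    rw [norm_mul, norm_mul, norm_mul, Complex.norm_real, Real.norm_eq_abs, Complex.norm_natCast, hγ, hwc v] at h1
    rw [h1, _root_.abs_of_nonneg (Real.sqrt_nonneg _), hβdef]
    ring
  -- all entries have modulus β
  obtain ⟨coef, hcoef⟩ := (Submodule.mem_span_range_iff_exists_fun ℝ).mp (by rw [hSdef] at hC₀S; exact hC₀S)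
  have hentry : ∀ u v' : V, ∃ j, A j u v' = 1 ∧ C₀ u v' = coef j := by
    intro u v'
    obtain ⟨j, hj1, hj0⟩ := class_exists A h01 hsumJ u v'
    refine ⟨j, hj1, ?_⟩
    have h1 := congrFun (congrFun hcoef u) v'
    have h2 : (∑ i, coef i • A i) u v' = ∑ i, coef i * A i u v' := by
      simp [Matrix.sum_apply, Matrix.smul_apply, smul_eq_mul]
    rw [h2] at h1
    rw [← h1, Finset.sum_eq_single j]
    · rw [hj1, mul_one]
    · intro b _ hb; rw [hj0 b hb, mul_zero]
    · intro hmem; exact absurd (Finset.mem_univ _) hmem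
  have habs : ∀ u v' : V, |C₀ u v'| = β := by
    intro u v'
    obtain ⟨j, hj1, hval⟩ := hentry u v'
    obtain ⟨v₀, hv₀⟩ := class_hits_column A h01 hsumJ hcomm hj1 a
    obtain ⟨j2, hj21, hval2⟩ := hentry v₀ a
    obtain ⟨jc, hjc1, hjc0⟩ := class_exists A h01 hsumJ v₀ a
    have e1 : j = jc := by
      by_contra hne
      rw [hjc0 j hne] at hv₀; norm_num at hv₀
    have e2 : j2 = jc := by
      by_contra hne
      rw [hjc0 j2 hne] at hj21; norm_num at hj21
    have : C₀ u v' = C₀ v₀ a := by rw [hval, hval2, e1, e2]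
    rw [this]
    exact hcolabs v₀
  -- the Gram identity for the limit
  have hsumsq : ∀ u : V, ∑ w', (C₀ w' u)^2 = (k:ℝ)^2 := by
    intro u
    have h1 : ∀ w', (C₀ w' u)^2 = β^2 := by
      intro w'
      rw [← _root_.sq_abs (C₀ w' u), habs w' u]
    rw [Finset.sum_congr rfl (fun w' _ => h1 w'), Finset.sum_const, nsmul_eq_mul, hβsq]
    field_simp
    simp
  have htendG : ∀ u v : V,
      Filter.Tendsto (fun m => ((Pmm G k (ts (φ m)))ᵀ * Pmm G k (ts (φ m))) u v)
        Filter.atTop (nhds (∑ w', C₀ w' u * C₀ w' v)) := by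
    intro u v
    have h1 : ∀ m, ((Pmm G k (ts (φ m)))ᵀ * Pmm G k (ts (φ m))) u v
        = ∑ w', Pmm G k (ts (φ m)) w' u * Pmm G k (ts (φ m)) w' v := by
      intro m
      rw [Matrix.mul_apply]
      exact Finset.sum_congr rfl fun w' _ => by rw [Matrix.transpose_apply]
    rw [funext h1]
    exact tendsto_finset_sum _ fun w' _ => ((htendE w' u).mul (htendE w' v))
  have hCtC : C₀ᵀ * C₀ = ((k:ℝ)^2) • (1 : Matrix V V ℝ) := by
    ext u v
    have hdiag : ∀ u' : V, Filter.Tendsto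
        (fun m => (((k:ℝ)^2) • (1 : Matrix V V ℝ)
          - (Pmm G k (ts (φ m)))ᵀ * Pmm G k (ts (φ m))) u' u') Filter.atTop (nhds 0) := by
      intro u'
      have h2 : ∀ m, (((k:ℝ)^2) • (1 : Matrix V V ℝ)
          - (Pmm G k (ts (φ m)))ᵀ * Pmm G k (ts (φ m))) u' u'
          = (k:ℝ)^2 - ((Pmm G k (ts (φ m)))ᵀ * Pmm G k (ts (φ m))) u' u' := by
        intro m; simp [Matrix.sub_apply, Matrix.smul_apply, Matrix.one_apply]
      rw [funext h2]
      have h3 : (0:ℝ) = (k:ℝ)^2 - ∑ w', C₀ w' u' * C₀ w' u' := by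
        have h3a : ∑ w', C₀ w' u' * C₀ w' u' = (k:ℝ)^2 := by
          simp only [← pow_two]
          exact hsumsq u'
        linarith
      rw [h3]
      exact Filter.Tendsto.const_sub _ (htendG u' u')
    rw [Matrix.smul_apply, Matrix.one_apply]
    by_cases huv : u = v
    · subst huv
      have h4 : (C₀ᵀ * C₀) u u = ∑ w', C₀ w' u * C₀ w' u := by
        rw [Matrix.mul_apply]
        exact Finset.sum_congr rfl fun w' _ => by rw [Matrix.transpose_apply]
      have h4a : ∑ w', C₀ w' u * C₀ w' u = (k:ℝ)^2 := by
        simp only [← pow_two]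
        exact hsumsq u
      rw [h4, h4a]
      simp
    · rw [if_neg huv]
      have hgoal : (∑ w', C₀ w' u * C₀ w' v) = 0 := by
        have hsq : Filter.Tendsto (fun m => ((((k:ℝ)^2) • (1 : Matrix V V ℝ)
            - (Pmm G k (ts (φ m)))ᵀ * Pmm G k (ts (φ m))) u v)^2)
            Filter.atTop (nhds ((∑ w', C₀ w' u * C₀ w' v)^2)) := by
          have h2 : ∀ m, (((k:ℝ)^2) • (1 : Matrix V V ℝ)
              - (Pmm G k (ts (φ m)))ᵀ * Pmm G k (ts (φ m))) u v
              = (k:ℝ)^2 * (if u = v then 1 else 0) - ((Pmm G k (ts (φ m)))ᵀ * Pmm G k (ts (φ m))) u v := by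
            intro m; simp [Matrix.sub_apply, Matrix.smul_apply, Matrix.one_apply]
          simp only [h2, if_neg huv]
          have h5 : Filter.Tendsto (fun m => (k:ℝ)^2 * 0 - ((Pmm G k (ts (φ m)))ᵀ * Pmm G k (ts (φ m))) u v)
              Filter.atTop (nhds ((k:ℝ)^2 * 0 - ∑ w', C₀ w' u * C₀ w' v)) :=
            Filter.Tendsto.const_sub _ (htendG u v)
          have h6 : ((k:ℝ)^2 * 0 - ∑ w', C₀ w' u * C₀ w' v) = -(∑ w', C₀ w' u * C₀ w' v) := by ring
          rw [h6] at h5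
          have h7 := h5.mul h5
          have h8 : (-(∑ w', C₀ w' u * C₀ w' v)) * (-(∑ w', C₀ w' u * C₀ w' v))
              = (∑ w', C₀ w' u * C₀ w' v)^2 := by ring
          rw [h8] at h7
          have h9 : ∀ m, ((k:ℝ)^2 * 0 - ((Pmm G k (ts (φ m)))ᵀ * Pmm G k (ts (φ m))) u v)
              * ((k:ℝ)^2 * 0 - ((Pmm G k (ts (φ m)))ᵀ * Pmm G k (ts (φ m))) u v)
              = ((k:ℝ)^2 * 0 - ((Pmm G k (ts (φ m)))ᵀ * Pmm G k (ts (φ m))) u v)^2 := by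
            intro m; ring
          rw [funext h9] at h7
          exact h7
        have hub : Filter.Tendsto (fun m =>
            ((((k:ℝ)^2) • (1 : Matrix V V ℝ) - (Pmm G k (ts (φ m)))ᵀ * Pmm G k (ts (φ m))) u u)
            * ((((k:ℝ)^2) • (1 : Matrix V V ℝ) - (Pmm G k (ts (φ m)))ᵀ * Pmm G k (ts (φ m))) v v))
            Filter.atTop (nhds 0) := by
          have := (hdiag u).mul (hdiag v)
          simpa using this
        have hle : (∑ w', C₀ w' u * C₀ w' v)^2 ≤ 0 := by
          apply le_of_tendsto_of_tendsto' hsq hub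
          intro m
          exact gram_cs G hk hreg (ts (φ m)) u v
        have := sq_nonneg (∑ w', C₀ w' u * C₀ w' v)
        have hz : (∑ w', C₀ w' u * C₀ w' v)^2 = 0 := le_antisymm hle this
        exact pow_eq_zero_iff (n := 2) (by norm_num) |>.mp hz
      have h4 : (C₀ᵀ * C₀) u v = ∑ w', C₀ w' u * C₀ w' v := by
        rw [Matrix.mul_apply]
        exact Finset.sum_congr rfl fun w' _ => by rw [Matrix.transpose_apply]
      rw [h4, hgoal]
      simp
  -- the Hadamard matrix
  obtain ⟨κ, hκdef⟩ : ∃ κ : ℝ, κ = Real.sqrt (Fintype.card V) / k := ⟨_, rfl⟩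
  have hκpos : 0 < κ := by
    rw [hκdef]
    exact div_pos (Real.sqrt_pos.mpr hnR) hkR
  obtain ⟨H, hHdef⟩ : ∃ H : Matrix V V ℝ, H = κ • C₀ := ⟨_, rfl⟩
  have hHmem : H ∈ S := by rw [hHdef]; exact S.smul_mem _ hC₀S
  have hκβ : κ * β = 1 := by
    have h1 : (κ * β)^2 = 1 := by
      rw [hκdef, mul_pow, div_pow, Real.sq_sqrt (le_of_lt hnR), hβsq]
      field_simp
    have h2 : 0 ≤ κ * β := mul_nonneg (le_of_lt hκpos) hβ0
    nlinarith
  have hHabs : ∀ u v : V, |H u v| = 1 := by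
    intro u v
    rw [hHdef, Matrix.smul_apply, smul_eq_mul, abs_mul, _root_.abs_of_pos hκpos, habs u v, hκβ]
  have hHpm : ∀ u v : V, H u v = 1 ∨ H u v = -1 := by
    intro u v
    exact (abs_eq (by norm_num : (0:ℝ) ≤ 1)).mp (hHabs u v)
  have hCt : C₀ᵀ ∈ S := span_transpose_closed A htrans C₀ hC₀S
  have hcommC : C₀ * C₀ᵀ = C₀ᵀ * C₀ := span_comm A hcomm C₀ hC₀S C₀ᵀ hCt
  have hHHt : H * Hᵀ = (Fintype.card V : ℝ) • (1 : Matrix V V ℝ) := by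
    have h1 : H * Hᵀ = (κ * κ) • (C₀ * C₀ᵀ) := by
      rw [hHdef, Matrix.transpose_smul, Matrix.smul_mul, Matrix.mul_smul, smul_smul]
    rw [h1, hcommC, hCtC, smul_smul]
    congr 1
    have hx : κ * κ = (Fintype.card V : ℝ) / ((k:ℝ)^2) := by
      rw [hκdef, div_mul_div_comm, Real.mul_self_sqrt (le_of_lt hnR), ← sq]
    rw [hx]
    field_simp
  have hrowc := rowsum_const_of_mem_span A hsumJ hcomm
  have hHrow : H.mulVec (fun _ => 1) = fun _ => (∑ v', H a v') := by
    funext u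
    rw [Matrix.mulVec, dotProduct]
    simp only [mul_one]
    exact hrowc H hHmem u a
  -- square part
  obtain ⟨sr, hsr⟩ : ∃ sr : ℝ, sr = ∑ v', H a v' := ⟨_, rfl⟩
  have hHt : Hᵀ ∈ S := by
    rw [hHdef, Matrix.transpose_smul]
    exact S.smul_mem _ hCt
  have hcolconst : ∀ v : V, ∑ u, H u v = ∑ u, H u a := by
    intro v
    have h1 := hrowc Hᵀ hHt v a
    simpa [Matrix.transpose_apply] using h1
  have hss' : sr = ∑ u, H u a := by
    have h1 : ∑ u, ∑ v', H u v' = (Fintype.card V : ℝ) * sr := by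
      rw [Finset.sum_congr rfl (fun u _ => hrowc H hHmem u a), hsr]
      simp [Finset.sum_const, Finset.card_univ, mul_comm]
    have h2 : ∑ u, ∑ v', H u v' = (Fintype.card V : ℝ) * (∑ u, H u a) := by
      rw [show ∑ u, ∑ v', H u v' = ∑ v', ∑ u, H u v' from Finset.sum_comm]
      rw [Finset.sum_congr rfl (fun v' _ => hcolconst v')]
      simp [Finset.sum_const, Finset.card_univ, mul_comm]
    have := h1.symm.trans h2
    exact mul_left_cancel₀ (ne_of_gt hnR) this
  have hs2 : sr * sr = (Fintype.card V : ℝ) := by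
    have h1 : ∑ u, (H * Hᵀ) a u = (Fintype.card V : ℝ) := by
      rw [hHHt]
      simp [Matrix.smul_apply, Matrix.one_apply, Finset.sum_ite_eq]
    have h2 : ∑ u, (H * Hᵀ) a u = sr * sr := by
      have h3 : ∀ u, (H * Hᵀ) a u = ∑ w', H a w' * H u w' := by
        intro u
        rw [Matrix.mul_apply]
        exact Finset.sum_congr rfl fun w' _ => by rw [Matrix.transpose_apply]
      rw [Finset.sum_congr rfl (fun u _ => h3 u), Finset.sum_comm]
      have h4 : ∀ w', (∑ u, H a w' * H u w') = H a w' * ∑ u, H u w' := by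
        intro w'
        rw [Finset.mul_sum]
      rw [Finset.sum_congr rfl (fun w' _ => h4 w'),
        Finset.sum_congr rfl (fun w' _ => by rw [hcolconst w'])]
      rw [← Finset.sum_mul, ← hsr, ← hss']
    rw [← h1, h2]
  -- integrality of the row sum
  obtain ⟨p, hp⟩ : ∃ p : ℕ, p = (Finset.univ.filter (fun v => H a v = 1)).card := ⟨_, rfl⟩
  obtain ⟨q, hq⟩ : ∃ q : ℕ, q = (Finset.univ.filter (fun v => ¬ (H a v = 1))).card := ⟨_, rfl⟩
  have hsr2 : sr = (p:ℝ) - (q:ℝ) := by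
    rw [hsr, ← Finset.sum_filter_add_sum_filter_not Finset.univ (fun v => H a v = 1) (fun v => H a v)]
    have h1 : ∑ v ∈ Finset.univ.filter (fun v => H a v = 1), H a v = (p:ℝ) := by
      rw [Finset.sum_congr rfl (fun v hv => (Finset.mem_filter.mp hv).2), Finset.sum_const, hp]
      simp
    have h2 : ∑ v ∈ Finset.univ.filter (fun v => ¬ (H a v = 1)), H a v = -(q:ℝ) := by
      have hneg : ∀ v ∈ Finset.univ.filter (fun v => ¬ (H a v = 1)), H a v = -1 := by
        intro v hv
        exact (hHpm a v).resolve_left (Finset.mem_filter.mp hv).2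
      rw [Finset.sum_congr rfl hneg, Finset.sum_const, hq]
      simp
    rw [h1, h2]
    ring
  have hzint : ((p:ℤ) - (q:ℤ)) * ((p:ℤ) - (q:ℤ)) = (Fintype.card V : ℤ) := by
    have h3 := hs2
    rw [hsr2] at h3
    exact_mod_cast h3
  have htt : ((p:ℤ) - (q:ℤ)).natAbs * ((p:ℤ) - (q:ℤ)).natAbs = Fintype.card V := by
    have h4 : ((((p:ℤ) - (q:ℤ)).natAbs * ((p:ℤ) - (q:ℤ)).natAbs : ℕ) : ℤ)
        = (Fintype.card V : ℤ) := by
      rw [Int.natAbs_mul_self]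
      exact hzint
    exact_mod_cast h4
  -- divisibility by four
  have hdvd : 2 < Fintype.card V → 4 ∣ Fintype.card V := by
    intro hn2
    have hcard3 : 2 < (Finset.univ : Finset V).card := by rw [Finset.card_univ]; exact hn2
    obtain ⟨a1', a2', a3', _, _, _, h12, h13, h23⟩ := Finset.two_lt_card_iff.mp hcard3
    have horth : ∀ u v : V, u ≠ v → ∑ w', H u w' * H v w' = 0 := by
      intro u v huv
      have h1 : (H * Hᵀ) u v = 0 := by
        rw [hHHt, Matrix.smul_apply, Matrix.one_apply_ne huv, smul_eq_mul, mul_zero]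
      rw [Matrix.mul_apply] at h1
      rw [← h1]
      exact Finset.sum_congr rfl fun w' _ => by rw [Matrix.transpose_apply]
    have hdiagH : ∑ w', H a1' w' * H a1' w' = (Fintype.card V : ℝ) := by
      have h1 : (H * Hᵀ) a1' a1' = (Fintype.card V : ℝ) := by
        rw [hHHt, Matrix.smul_apply, Matrix.one_apply_eq, smul_eq_mul, mul_one]
      rw [Matrix.mul_apply] at h1
      rw [← h1]
      exact Finset.sum_congr rfl fun w' _ => by rw [Matrix.transpose_apply]
    have hsumf : ∑ v, (H a1' v + H a2' v) * (H a1' v + H a3' v) = (Fintype.card V : ℝ) := by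
      have hexp : ∀ v, (H a1' v + H a2' v) * (H a1' v + H a3' v)
          = H a1' v * H a1' v + H a1' v * H a3' v + (H a2' v * H a1' v + H a2' v * H a3' v) :=
        fun v => by ring
      rw [Finset.sum_congr rfl (fun v _ => hexp v), Finset.sum_add_distrib, Finset.sum_add_distrib,
        Finset.sum_add_distrib]
      rw [hdiagH, horth a1' a3' h13, horth a2' a1' (Ne.symm h12), horth a2' a3' h23]
      ring
    have hf4 : ∀ v, (H a1' v + H a2' v) * (H a1' v + H a3' v) = 0
        ∨ (H a1' v + H a2' v) * (H a1' v + H a3' v) = 4 := by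
      intro v
      rcases hHpm a1' v with h1 | h1 <;> rcases hHpm a2' v with h2 | h2 <;>
        rcases hHpm a3' v with h3 | h3 <;> rw [h1, h2, h3] <;> norm_num
    obtain ⟨m4, hm4⟩ : ∃ m : ℕ,
        m = (Finset.univ.filter (fun v => (H a1' v + H a2' v) * (H a1' v + H a3' v) = 4)).card :=
      ⟨_, rfl⟩
    have hval : (Fintype.card V : ℝ) = 4 * (m4:ℝ) := by
      rw [← hsumf,
        ← Finset.sum_filter_add_sum_filter_not Finset.univ
          (fun v => (H a1' v + H a2' v) * (H a1' v + H a3' v) = 4)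
          (fun v => (H a1' v + H a2' v) * (H a1' v + H a3' v))]
      have hA : ∑ v ∈ Finset.univ.filter
          (fun v => (H a1' v + H a2' v) * (H a1' v + H a3' v) = 4),
          (H a1' v + H a2' v) * (H a1' v + H a3' v) = 4 * (m4:ℝ) := by
        rw [Finset.sum_congr rfl (fun v hv => (Finset.mem_filter.mp hv).2), Finset.sum_const, hm4]
        simp [mul_comm]
      have hB : ∑ v ∈ Finset.univ.filter
          (fun v => ¬ ((H a1' v + H a2' v) * (H a1' v + H a3' v) = 4)),
          (H a1' v + H a2' v) * (H a1' v + H a3' v) = 0 := by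
        apply Finset.sum_eq_zero
        intro v hv
        exact (hf4 v).resolve_right (Finset.mem_filter.mp hv).2
      rw [hA, hB, add_zero]
    have hvalnat : Fintype.card V = 4 * m4 := by exact_mod_cast hval
    exact ⟨m4, hvalnat⟩
  exact ⟨⟨H, hHmem, hHpm, hHHt, ⟨sr, by rw [hsr]; exact hHrow⟩⟩,
    ⟨((p:ℤ) - (q:ℤ)).natAbs, htt⟩, hdvd⟩

end QW
end
end
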